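/- arXiv:2111.04258 — 2 statements merged into one kernel-verified Lean document; each statement's English description precedes it below -/
import Mathlib

section
/- Let D⁰ →α⁰ A⁰ →β⁰ B⁰ →δ⁰ D¹ →α¹ A¹ ⇉(β¹₁,β¹₂) B¹ be an exact sequence of pointed sets (exactness at A¹ meaning the equalizer of β¹₁ and β¹₂ equals the image of α¹). Let C⁰ be a group, C¹ a pointed set, and ε⁰: A⁰ → C⁰, ε¹: A¹ → C¹ maps of pointed sets with ε⁰ a map to the group C⁰. Define α'ⁱ(d) = (αⁱ(d), εⁱ(αⁱ(d))), β'⁰(a,c) = (β⁰(a), ε⁰(a)⁻¹·c), β'¹₁(a,c) = (β¹₁(a), c), β'¹₂(a,c) = (β¹₂(a), ε¹(a)), and δ'⁰(b,c) = δ⁰(b). Then D⁰ →α'⁰ A⁰×C⁰ →β'⁰ B⁰×C⁰ →δ'⁰ D¹ →α'¹ A¹×C¹ ⇉ B¹×C¹ is also an exact sequence of pointed sets. -/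
/-!
Each position of the new sequence reduces to the same position of the old one. In
`A⁰ × C⁰` the kernel of `β'⁰` is the graph of `ε⁰` over `ker β⁰ = im α⁰`, since
`ε⁰(a)⁻¹ c = 1` forces `c = ε⁰(a)`. The second coordinate of `β'⁰` is onto `C⁰`
(take `c := ε⁰(a) c'`), so `im β'⁰ = im β⁰ × C⁰`. At `D¹` the extra coordinate
`ε¹(α¹ d)` is the base point as soon as `α¹ d` is, and at `A¹ × C¹` the second
coordinates of `β'¹₁, β'¹₂` agree exactly on the graph of `ε¹`.
-/

section PointedExact

variable {D A B C : Type*}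

theorem exact_graph_of_exact [Group C] {α : D → A} {β : A → B} {b : B} (ε : A → C)
    (hex : ∀ a, β a = b ↔ ∃ d, α d = a) (p : A × C) :
    (β p.1 = b ∧ (ε p.1)⁻¹ * p.2 = 1) ↔ ∃ d, (α d, ε (α d)) = p := by
  rw [inv_mul_eq_one, hex]
  constructor
  · rintro ⟨⟨d, hd⟩, hc⟩
    exact ⟨d, Prod.ext hd (hd ▸ hc)⟩
  · rintro ⟨d, rfl⟩
    exact ⟨⟨d, rfl⟩, rfl⟩

theorem exact_twist_of_exact [Group C] {β : A → B} {δ : B → D} {d : D} (ε : A → C)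
    (hex : ∀ b, δ b = d ↔ ∃ a, β a = b) (p : B × C) :
    δ p.1 = d ↔ ∃ q : A × C, (β q.1, (ε q.1)⁻¹ * q.2) = p := by
  rw [hex]
  constructor
  · rintro ⟨a, ha⟩
    exact ⟨(a, ε a * p.2), Prod.ext ha (inv_mul_cancel_left _ _)⟩
  · rintro ⟨q, rfl⟩
    exact ⟨q.1, rfl⟩

theorem exact_fst_of_exact {E : Type*} [Nonempty C] {δ : B → D} {α : D → A} {a : A} {e : E}
    {ε : A → E} (hε : ε a = e) (hex : ∀ d, α d = a ↔ ∃ b, δ b = d) (d : D) :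
    (α d, ε (α d)) = (a, e) ↔ ∃ p : B × C, δ p.1 = d := by
  constructor
  · intro h
    obtain ⟨b, hb⟩ := (hex d).mp (congrArg Prod.fst h)
    exact ⟨(b, Classical.arbitrary C), hb⟩
  · rintro ⟨p, hp⟩
    rw [(hex d).mpr ⟨p.1, hp⟩, hε]

theorem exact_equalizer_graph_of_exact {α : D → A} {β₁ β₂ : A → B} (ε : A → C)
    (hex : ∀ a, β₁ a = β₂ a ↔ ∃ d, α d = a) (p : A × C) :
    (β₁ p.1, p.2) = (β₂ p.1, ε p.1) ↔ ∃ d, (α d, ε (α d)) = p := by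
  rw [Prod.mk.injEq, hex]
  constructor
  · rintro ⟨⟨d, hd⟩, hc⟩
    exact ⟨d, Prod.ext hd (hd ▸ hc.symm)⟩
  · rintro ⟨d, rfl⟩
    exact ⟨⟨d, rfl⟩, rfl⟩

end PointedExact

theorem stmt_0_general
    {D0 A0 B0 D1 A1 B1 C1 : Type*} {C0 : Type*} [Group C0]
    -- distinguished elements
    (b0 : B0) (d1pt : D1) (a1pt : A1) (c1pt : C1)
    -- the maps of the original sequence
    (α0 : D0 → A0) (β0 : A0 → B0) (δ0 : B0 → D1) (α1 : D1 → A1) (β11 β12 : A1 → B1)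
    -- the auxiliary maps of pointed sets
    (ε0 : A0 → C0) (ε1 : A1 → C1)
    -- all maps are maps of pointed sets
    (hε1 : ε1 a1pt = c1pt)
    -- exactness of the original sequence
    (exA0 : ∀ a : A0, β0 a = b0 ↔ ∃ d : D0, α0 d = a)
    (exB0 : ∀ b : B0, δ0 b = d1pt ↔ ∃ a : A0, β0 a = b)
    (exD1 : ∀ d : D1, α1 d = a1pt ↔ ∃ b : B0, δ0 b = d)
    (exA1 : ∀ a : A1, β11 a = β12 a ↔ ∃ d : D1, α1 d = a) :
    -- exactness of the expanded sequence
    -- D⁰ →α'⁰ A⁰×C⁰ →β'⁰ B⁰×C⁰ →δ'⁰ D¹ →α'¹ A¹×C¹ ⇉ B¹×C¹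
    (∀ p : A0 × C0, (β0 p.1 = b0 ∧ (ε0 p.1)⁻¹ * p.2 = (1 : C0)) ↔
        ∃ d : D0, (α0 d, ε0 (α0 d)) = p) ∧
    (∀ p : B0 × C0, δ0 p.1 = d1pt ↔
        ∃ q : A0 × C0, (β0 q.1, (ε0 q.1)⁻¹ * q.2) = p) ∧
    (∀ d : D1, (α1 d, ε1 (α1 d)) = (a1pt, c1pt) ↔
        ∃ p : B0 × C0, δ0 p.1 = d) ∧
    (∀ p : A1 × C1, ((β11 p.1, p.2) : B1 × C1) = (β12 p.1, ε1 p.1) ↔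
        ∃ d : D1, (α1 d, ε1 (α1 d)) = p) :=
  ⟨exact_graph_of_exact ε0 exA0, exact_twist_of_exact ε0 exB0,
    exact_fst_of_exact hε1 exD1, exact_equalizer_graph_of_exact ε1 exA1⟩

/-- Extending an exact sequence of pointed sets
`D⁰ → A⁰ → B⁰ → D¹ → A¹ ⇉ B¹` by a group `C⁰` and a pointed set `C¹`. -/
theorem stmt_0
    {D0 A0 B0 D1 A1 B1 C1 : Type*} {C0 : Type*} [Group C0]
    -- distinguished elements
    (a0 : A0) (b0 : B0) (d1pt : D1) (a1pt : A1) (b1pt : B1) (c1pt : C1)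
    -- the maps of the original sequence
    (α0 : D0 → A0) (β0 : A0 → B0) (δ0 : B0 → D1) (α1 : D1 → A1) (β11 β12 : A1 → B1)
    -- the auxiliary maps of pointed sets
    (ε0 : A0 → C0) (ε1 : A1 → C1)
    -- all maps are maps of pointed sets
    (hβ0 : β0 a0 = b0) (hδ0 : δ0 b0 = d1pt) (hα1 : α1 d1pt = a1pt)
    (hβ11 : β11 a1pt = b1pt) (hβ12 : β12 a1pt = b1pt)
    (hε0 : ε0 a0 = 1) (hε1 : ε1 a1pt = c1pt)
    -- exactness of the original sequence
    (exA0 : ∀ a : A0, β0 a = b0 ↔ ∃ d : D0, α0 d = a)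
    (exB0 : ∀ b : B0, δ0 b = d1pt ↔ ∃ a : A0, β0 a = b)
    (exD1 : ∀ d : D1, α1 d = a1pt ↔ ∃ b : B0, δ0 b = d)
    (exA1 : ∀ a : A1, β11 a = β12 a ↔ ∃ d : D1, α1 d = a) :
    -- exactness of the expanded sequence
    -- D⁰ →α'⁰ A⁰×C⁰ →β'⁰ B⁰×C⁰ →δ'⁰ D¹ →α'¹ A¹×C¹ ⇉ B¹×C¹
    (∀ p : A0 × C0, (β0 p.1 = b0 ∧ (ε0 p.1)⁻¹ * p.2 = (1 : C0)) ↔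
        ∃ d : D0, (α0 d, ε0 (α0 d)) = p) ∧
    (∀ p : B0 × C0, δ0 p.1 = d1pt ↔
        ∃ q : A0 × C0, (β0 q.1, (ε0 q.1)⁻¹ * q.2) = p) ∧
    (∀ d : D1, (α1 d, ε1 (α1 d)) = (a1pt, c1pt) ↔
        ∃ p : B0 × C0, δ0 p.1 = d) ∧
    (∀ p : A1 × C1, ((β11 p.1, p.2) : B1 × C1) = (β12 p.1, ε1 p.1) ↔
        ∃ d : D1, (α1 d, ε1 (α1 d)) = p) :=
  stmt_0_general b0 d1pt a1pt c1pt α0 β0 δ0 α1 β11 β12 ε0 ε1 hε1 exA0 exB0 exD1 exA1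
end

section
/- Let k be a field of characteristic zero. The element a = ∑_{n≥1} tⁿ/(x−n) ∈ k(x)[[t]] does not lie in the image of k((t))(x) inside k(x)((t)); equivalently, a is not a rational function in x over k((t)). -/
/-- The natural embedding of `k[[t]][x]` into `k(x)[[t]]`: a polynomial in `x`
with power-series coefficients is sent to the power series in `t` whose `n`-th
coefficient is the rational function obtained from the `n`-th `t`-coefficients. -/
noncomputable def polyToSeries (k : Type*) [Field k]
    (p : Polynomial (PowerSeries k)) : PowerSeries (RatFunc k) :=
  PowerSeries.mk fun n =>
    ∑ i ∈ p.support, RatFunc.C (PowerSeries.coeff (R := k) n (p.coeff i)) * RatFunc.X ^ i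

/-- The element `a = ∑_{n≥1} tⁿ/(x−n)` of `k(x)[[t]]`. -/
noncomputable def theSeries (k : Type*) [Field k] : PowerSeries (RatFunc k) :=
  PowerSeries.mk fun n =>
    if n = 0 then 0 else (RatFunc.X - RatFunc.C ((n : k)))⁻¹

open Polynomial

open Polynomial

noncomputable def Qpoly {k : Type*} [Field k] (q : Polynomial (PowerSeries k)) (m : ℕ) :
    Polynomial k :=
  ∑ i ∈ q.support, Polynomial.C (PowerSeries.coeff (R := k) m (q.coeff i)) * Polynomial.X ^ i

lemma coeff_Qpoly {k : Type*} [Field k] (q : Polynomial (PowerSeries k)) (m i : ℕ) :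
    (Qpoly q m).coeff i = PowerSeries.coeff (R := k) m (q.coeff i) := by
  rw [Qpoly, Polynomial.finset_sum_coeff]
  simp only [Polynomial.coeff_C_mul, Polynomial.coeff_X_pow]
  rw [Finset.sum_eq_single i]
  · by_cases h : i ∈ q.support
    · simp
    · simp [Polynomial.notMem_support_iff.mp h]
  · intro b _ hb; simp [Ne.symm hb]
  · intro h; simp [Polynomial.notMem_support_iff.mp h]


lemma coeff_polyToSeries {k : Type*} [Field k] (q : Polynomial (PowerSeries k)) (n : ℕ) :
    PowerSeries.coeff (R := RatFunc k) n (polyToSeries k q)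
      = algebraMap k[X] (RatFunc k) (Qpoly q n) := by
  simp [polyToSeries, Qpoly, map_sum, map_mul, map_pow, RatFunc.algebraMap_C,
    RatFunc.algebraMap_X, PowerSeries.coeff_mk]


lemma key {k : Type*} [Field k] [CharZero k] (p q : Polynomial (PowerSeries k))
    (h : polyToSeries k q * theSeries k = polyToSeries k p) (m N : ℕ) (hN : 1 ≤ N) :
    (Qpoly q m).eval (N : k) = 0 := by
  set n := m + N with hn
  have hNn : N ∈ Finset.Icc 1 n := by
    simp [Finset.mem_Icc, hN, hn]
  -- the n-th coefficient identity
  have hcoeff := congrArg (PowerSeries.coeff (R := RatFunc k) n) h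
  rw [PowerSeries.coeff_mul] at hcoeff
  simp only [coeff_polyToSeries, theSeries, PowerSeries.coeff_mk] at hcoeff
  -- the denominator-clearing polynomials
  set D : k[X] := ∏ j ∈ Finset.Icc 1 n, (Polynomial.X - Polynomial.C (j : k)) with hD
  set Drem : ℕ → k[X] :=
    fun j => ∏ j' ∈ (Finset.Icc 1 n).erase j, (Polynomial.X - Polynomial.C ((j' : ℕ) : k))
    with hDrem
  have stepA : ∀ j ∈ Finset.Icc 1 n,
      algebraMap k[X] (RatFunc k) D * (RatFunc.X - RatFunc.C ((j : ℕ) : k))⁻¹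
        = algebraMap k[X] (RatFunc k) (Drem j) := by
    intro j hj
    have hfac : D = (Polynomial.X - Polynomial.C ((j : ℕ) : k)) * Drem j :=
      (Finset.mul_prod_erase _ _ hj).symm
    have hXC : algebraMap k[X] (RatFunc k) (Polynomial.X - Polynomial.C ((j : ℕ) : k))
        = RatFunc.X - RatFunc.C ((j : ℕ) : k) := by
      rw [map_sub, RatFunc.algebraMap_X, RatFunc.algebraMap_C]
    have hne : (RatFunc.X - RatFunc.C ((j : ℕ) : k)) ≠ 0 := by
      rw [← hXC]
      simp only [ne_eq, map_eq_zero_iff _ (RatFunc.algebraMap_injective k)]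
      exact Polynomial.X_sub_C_ne_zero _
    rw [hfac, map_mul, hXC, mul_comm (RatFunc.X - RatFunc.C ((j : ℕ) : k)) _, mul_assoc,
      mul_inv_cancel₀ hne, mul_one]
  -- multiply the coefficient identity by `D` and pull back to polynomials
  have hpoly : (∑ x ∈ Finset.HasAntidiagonal.antidiagonal n,
      if x.2 = 0 then 0 else Qpoly q x.1 * Drem x.2) = D * Qpoly p n := by
    apply RatFunc.algebraMap_injective k
    rw [map_mul, ← hcoeff, Finset.mul_sum, map_sum]
    refine Finset.sum_congr rfl ?_
    intro x hx
    by_cases hx2 : x.2 = 0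
    · simp [hx2]
    · have hx2' : x.2 ∈ Finset.Icc 1 n := by
        have := Finset.HasAntidiagonal.mem_antidiagonal.mp hx
        refine Finset.mem_Icc.mpr ⟨Nat.one_le_iff_ne_zero.mpr hx2, ?_⟩
        omega
      rw [if_neg hx2, map_mul, ← stepA x.2 hx2', if_neg hx2]
      ring
  -- evaluate at `N`
  have heval := congrArg (Polynomial.eval ((N : ℕ) : k)) hpoly
  rw [Polynomial.eval_mul] at heval
  have hDzero : D.eval ((N : ℕ) : k) = 0 := by
    rw [hD, Polynomial.eval_prod]
    exact Finset.prod_eq_zero hNn (by simp)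
  rw [hDzero, zero_mul, Polynomial.eval_finset_sum] at heval
  rw [Finset.sum_eq_single (m, N)] at heval
  · have hNne : (N : ℕ) ≠ 0 := by omega
    rw [if_neg hNne, Polynomial.eval_mul] at heval
    have hDremN : (Drem N).eval ((N : ℕ) : k) ≠ 0 := by
      rw [hDrem, Polynomial.eval_prod]
      refine Finset.prod_ne_zero_iff.mpr ?_
      intro j' hj'
      have : j' ≠ N := (Finset.mem_erase.mp hj').1
      simp only [Polynomial.eval_sub, Polynomial.eval_X, Polynomial.eval_C, sub_ne_zero]
      exact fun hc => this (Nat.cast_injective hc).symm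
    exact (mul_eq_zero.mp heval).resolve_right hDremN
  · intro b hb hbne
    by_cases hb2 : b.2 = 0
    · simp [hb2]
    · rw [if_neg hb2, Polynomial.eval_mul]
      have hb2N : b.2 ≠ N := by
        intro hc
        apply hbne
        have := Finset.HasAntidiagonal.mem_antidiagonal.mp hb
        have : b.1 = m := by omega
        exact Prod.ext this hc
      have : (Drem b.2).eval ((N : ℕ) : k) = 0 := by
        rw [hDrem, Polynomial.eval_prod]
        exact Finset.prod_eq_zero (Finset.mem_erase.mpr ⟨Ne.symm hb2N, hNn⟩) (by simp)
      rw [this, mul_zero]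
  · intro hmem
    exact absurd (Finset.HasAntidiagonal.mem_antidiagonal.mpr hn.symm) hmem

/-- For a field `k` of characteristic zero, the element
`a = ∑_{n≥1} tⁿ/(x−n) ∈ k(x)[[t]]` does not lie in the image of `k((t))(x)`,
i.e. it is not a rational function in `x` over `k((t))`: there are no
polynomials `p, q ∈ k[[t]][x]` with `q ≠ 0` and `q·a = p` in `k(x)[[t]]`. -/
theorem stmt_5 (k : Type*) [Field k] [CharZero k] :
    ¬ ∃ p q : Polynomial (PowerSeries k),
        q ≠ 0 ∧ polyToSeries k q * theSeries k = polyToSeries k p := by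
  rintro ⟨p, q, hq, h⟩
  apply hq
  have hQ : ∀ m, Qpoly q m = 0 := by
    intro m
    apply Polynomial.eq_zero_of_infinite_isRoot
    apply Set.infinite_of_injective_forall_mem (f := fun N : ℕ => ((N + 1 : ℕ) : k))
    · intro a b hab
      have : a + 1 = b + 1 := Nat.cast_injective hab
      omega
    · intro N
      exact key p q h m (N + 1) (by omega)
  ext i n
  rw [← coeff_Qpoly q n i, hQ n]
  simp
end
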